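/- Let A ∈ R^{m×N} have entries A_{j,k} = ±1 and satisfy (a) |∑_{j=1}^m A_{j,k}A_{j,k'}| ≤ κ√m for all distinct k, k' ∈ [1:N], and (b) |∑_{j=1}^m A_{j,k}A_{j,k'}A_{j,ℓ}A_{j,ℓ'}| ≤ κ√m for all distinct k, k', ℓ, ℓ' ∈ [1:N]. Then for any δ ∈ (0,1), as soon as m ≥ κ² δ^{−2} s⁴, there exist α, β > 0 with β/α ≤ √3 ((1+δ)/(1−δ))^{3/2} such that α m ||x||_2 ≤ ||Ax||_1 ≤ β m ||x||_2 for all s-sparse x ∈ R^N; explicitly one can take α = ((1−δ)³/(3(1+δ)))^{1/2} and β = (1+δ)^{1/2}. -/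

import Mathlib

/-!
Write `y = A x` and `E = ‖x‖₂²`. Expanding `‖y‖₂²` and `‖y‖₄⁴` in the entries of `x`, the `±1`
entries make every paired coefficient `∑ⱼ A_{ja} A_{jb} A_{jc} A_{jd}` equal to `m`, which gives
the main terms `m E` and at most `3 m E²`, while (a) and (b) bound every other coefficient by
`κ√m`. For `s`-sparse `x` we have `‖x‖₁² ≤ s E`, and `m ≥ κ² s⁴ / δ²` makes the remainders at
most `δ m E` and `δ m E²`. Cauchy–Schwarz `‖y‖₁² ≤ m ‖y‖₂²` then gives the upper bound, and the
interpolation inequality `‖y‖₂⁶ ≤ ‖y‖₁² ‖y‖₄⁴` gives the lower one.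
-/

open Finset Matrix

section

variable {ι : Type*}

theorem sum_sq_pow_three_le_sq_sum_abs_mul_sum_pow_four (s : Finset ι) (y : ι → ℝ) :
    (∑ i ∈ s, y i ^ 2) ^ 3 ≤ (∑ i ∈ s, |y i|) ^ 2 * ∑ i ∈ s, y i ^ 4 := by
  have h₁ : (∑ i ∈ s, y i ^ 2) ^ 2 ≤ (∑ i ∈ s, |y i|) * ∑ i ∈ s, |y i| ^ 3 :=
    sum_sq_le_sum_mul_sum_of_sq_le_mul s (fun i _ => abs_nonneg _) (fun i _ => by positivity)
      fun i _ => le_of_eq <| by rw [← sq_abs (y i)]; ring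
  have h₂ : (∑ i ∈ s, |y i| ^ 3) ^ 2 ≤ (∑ i ∈ s, y i ^ 2) * ∑ i ∈ s, y i ^ 4 :=
    sum_sq_le_sum_mul_sum_of_sq_le_mul s (fun i _ => by positivity) (fun i _ => by positivity)
      fun i _ => le_of_eq <| by rw [← abs_pow, sq_abs]; ring
  obtain h | h := (sum_nonneg fun i _ => sq_nonneg (y i) : 0 ≤ ∑ i ∈ s, y i ^ 2).eq_or_lt
  · rw [← h, zero_pow three_ne_zero]; positivity
  refine le_of_mul_le_mul_right ?_ h
  calc (∑ i ∈ s, y i ^ 2) ^ 3 * ∑ i ∈ s, y i ^ 2 = ((∑ i ∈ s, y i ^ 2) ^ 2) ^ 2 := by ring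
    _ ≤ ((∑ i ∈ s, |y i|) * ∑ i ∈ s, |y i| ^ 3) ^ 2 := by gcongr
    _ = (∑ i ∈ s, |y i|) ^ 2 * (∑ i ∈ s, |y i| ^ 3) ^ 2 := by ring
    _ ≤ (∑ i ∈ s, |y i|) ^ 2 * ((∑ i ∈ s, y i ^ 2) * ∑ i ∈ s, y i ^ 4) := by gcongr
    _ = _ := by ring

theorem sq_sum_abs_le_ncard_mul_sum_sq [Fintype ι] (x : ι → ℝ) :
    (∑ k, |x k|) ^ 2 ≤ {k | x k ≠ 0}.ncard * ∑ k, x k ^ 2 := by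
  classical
  have hsupp : {k | x k ≠ 0}.ncard = #{k | x k ≠ 0} := by
    rw [← Set.ncard_coe_finset]; simp
  rw [hsupp, ← sum_filter_of_ne (p := fun k => x k ≠ 0) fun k _ h => abs_ne_zero.mp h]
  calc (∑ k with x k ≠ 0, |x k|) ^ 2 ≤ #{k | x k ≠ 0} * ∑ k with x k ≠ 0, |x k| ^ 2 :=
        sq_sum_le_card_mul_sum_sq
    _ ≤ #{k | x k ≠ 0} * ∑ k, x k ^ 2 := by
        simp only [sq_abs]
        exact mul_le_mul_of_nonneg_left
          (sum_le_sum_of_subset_of_nonneg (filter_subset _ _) fun k _ _ => sq_nonneg _)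
          (Nat.cast_nonneg _)

variable [Fintype ι] {δ E : ℝ}

theorem sum_pow_four_eq (f : ι → ℝ) :
    (∑ k, f k) ^ 4 = ∑ a, ∑ b, ∑ c, ∑ d, f a * f b * f c * f d := by
  calc (∑ k, f k) ^ 4 = ∑ a, f a * ∑ b, f b * ∑ c, f c * ∑ d, f d := by
        simp only [← sum_mul]; ring
    _ = _ := by simp only [mul_sum, mul_assoc]

theorem sum_abs_le_of_sum_sq_le (y : ι → ℝ) (hδ : 0 ≤ 1 + δ) (hE : 0 ≤ E)
    (h : ∑ j, y j ^ 2 ≤ (1 + δ) * Fintype.card ι * E) :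
    ∑ j, |y j| ≤ √(1 + δ) * Fintype.card ι * √E := by
  refine (pow_le_pow_iff_left₀ (by positivity) (by positivity) two_ne_zero).mp ?_
  calc (∑ j, |y j|) ^ 2 ≤ Fintype.card ι * ∑ j, |y j| ^ 2 := sq_sum_le_card_mul_sum_sq
    _ ≤ Fintype.card ι * ((1 + δ) * Fintype.card ι * E) := by
        simp only [sq_abs]; exact mul_le_mul_of_nonneg_left h (Nat.cast_nonneg _)
    _ = (√(1 + δ) * Fintype.card ι * √E) ^ 2 := by
        rw [mul_pow, mul_pow, Real.sq_sqrt hδ, Real.sq_sqrt hE]; ring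

theorem le_sum_abs_of_moment_bounds (y : ι → ℝ) {m : ℝ} (hm : 0 ≤ m) (hδ : δ < 1)
    (hδ' : 0 < 1 + δ) (hE : 0 ≤ E) (h₂ : (1 - δ) * m * E ≤ ∑ j, y j ^ 2)
    (h₄ : ∑ j, y j ^ 4 ≤ 3 * (1 + δ) * m * E ^ 2) :
    √((1 - δ) ^ 3 / (3 * (1 + δ))) * m * √E ≤ ∑ j, |y j| := by
  refine (pow_le_pow_iff_left₀ (by positivity) (by positivity) two_ne_zero).mp ?_
  rw [mul_pow, mul_pow, Real.sq_sqrt (by positivity), Real.sq_sqrt hE, div_mul_eq_mul_div,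
    div_mul_eq_mul_div, div_le_iff₀ (by positivity)]
  obtain hmE | hmE := (mul_nonneg hm (sq_nonneg E)).eq_or_lt
  · have : m * E = 0 := by
      rcases mul_eq_zero.mp hmE.symm with h | h
      · rw [h, zero_mul]
      · rw [pow_eq_zero_iff two_ne_zero |>.mp h, mul_zero]
    calc (1 - δ) ^ 3 * m ^ 2 * E = (1 - δ) ^ 3 * m * (m * E) := by ring
      _ = 0 := by rw [this, mul_zero]
      _ ≤ _ := by positivity
  refine le_of_mul_le_mul_right ?_ hmE
  calc (1 - δ) ^ 3 * m ^ 2 * E * (m * E ^ 2) = ((1 - δ) * m * E) ^ 3 := by ring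
    _ ≤ (∑ j, y j ^ 2) ^ 3 := by gcongr
    _ ≤ (∑ j, |y j|) ^ 2 * ∑ j, y j ^ 4 := sum_sq_pow_three_le_sq_sum_abs_mul_sum_pow_four _ y
    _ ≤ (∑ j, |y j|) ^ 2 * (3 * (1 + δ) * m * E ^ 2) := by gcongr
    _ = (∑ j, |y j|) ^ 2 * (3 * (1 + δ)) * (m * E ^ 2) := by ring

end

section

variable {ι η : Type*} [Fintype ι] {A : Matrix ι η ℝ} {ε : ℝ}

theorem sum_mul_four_eq_card (hA : ∀ j k, A j k ^ 2 = 1) {a b c d : η}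
    (h : (a = b ∧ c = d) ∨ (a = c ∧ b = d) ∨ (a = d ∧ b = c)) :
    ∑ j, A j a * A j b * A j c * A j d = Fintype.card ι := by
  have hj : ∀ j, A j a * A j b * A j c * A j d = 1 := by
    intro j
    rcases h with ⟨rfl, rfl⟩ | ⟨rfl, rfl⟩ | ⟨rfl, rfl⟩ <;> ring_nf <;> simp [hA]
  simp [hj]

theorem abs_sum_mul_four_le (hA : ∀ j k, A j k ^ 2 = 1)
    (ha : ∀ k k', k ≠ k' → |∑ j, A j k * A j k'| ≤ ε)
    (hb : ∀ k k' l l', k ≠ k' → k ≠ l → k ≠ l' → k' ≠ l → k' ≠ l' → l ≠ l' →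
      |∑ j, A j k * A j k' * A j l * A j l'| ≤ ε) {a b c d : η}
    (h : ¬((a = b ∧ c = d) ∨ (a = c ∧ b = d) ∨ (a = d ∧ b = c))) :
    |∑ j, A j a * A j b * A j c * A j d| ≤ ε := by
  have reduce : ∀ {k k'}, k ≠ k' → (∀ j, A j a * A j b * A j c * A j d = A j k * A j k') →
      |∑ j, A j a * A j b * A j c * A j d| ≤ ε := fun hkk' e => by
    simpa only [e] using ha _ _ hkk'
  push Not at h
  obtain ⟨h₁, h₂, h₃⟩ := h
  by_cases hab : a = b
  · subst hab; exact reduce (h₁ rfl) fun j => by linear_combination (A j c * A j d) * hA j a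
  by_cases hac : a = c
  · subst hac; exact reduce (h₂ rfl) fun j => by linear_combination (A j b * A j d) * hA j a
  by_cases had : a = d
  · subst had; exact reduce (h₃ rfl) fun j => by linear_combination (A j b * A j c) * hA j a
  by_cases hbc : b = c
  · subst hbc; exact reduce had fun j => by linear_combination (A j a * A j d) * hA j b
  by_cases hbd : b = d
  · subst hbd; exact reduce hac fun j => by linear_combination (A j a * A j c) * hA j b
  by_cases hcd : c = d
  · subst hcd; exact reduce hab fun j => by linear_combination (A j a * A j b) * hA j c
  exact hb a b c d hab hac had hbc hbd hcd

variable [DecidableEq η]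

noncomputable def pairingWeight (x : η → ℝ) (a b c d : η) : ℝ :=
  (if a = b ∧ c = d then x a ^ 2 * x c ^ 2 else 0) +
    (if a = c ∧ b = d then x a ^ 2 * x b ^ 2 else 0) +
    (if a = d ∧ b = c then x a ^ 2 * x b ^ 2 else 0)

theorem pairingWeight_nonneg (x : η → ℝ) (a b c d : η) : 0 ≤ pairingWeight x a b c d := by
  unfold pairingWeight; positivity

theorem mul_le_pairingWeight (x : η → ℝ) {a b c d : η}
    (h : (a = b ∧ c = d) ∨ (a = c ∧ b = d) ∨ (a = d ∧ b = c)) :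
    x a * x b * x c * x d ≤ pairingWeight x a b c d := by
  have h₁ : 0 ≤ if a = b ∧ c = d then x a ^ 2 * x c ^ 2 else 0 := by positivity
  have h₂ : 0 ≤ if a = c ∧ b = d then x a ^ 2 * x b ^ 2 else 0 := by positivity
  have h₃ : 0 ≤ if a = d ∧ b = c then x a ^ 2 * x b ^ 2 else 0 := by positivity
  unfold pairingWeight
  rcases h with ⟨rfl, rfl⟩ | ⟨rfl, rfl⟩ | ⟨rfl, rfl⟩ <;> simp only [and_self, if_true] at * <;>
    nlinarith

-- The diagonal `a = b = c = d` is counted by all three pairings: this is the `3` of the bound.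
theorem mul_sum_mul_four_le_pairingWeight (hε : 0 ≤ ε) (hA : ∀ j k, A j k ^ 2 = 1)
    (ha : ∀ k k', k ≠ k' → |∑ j, A j k * A j k'| ≤ ε)
    (hb : ∀ k k' l l', k ≠ k' → k ≠ l → k ≠ l' → k' ≠ l → k' ≠ l' → l ≠ l' →
      |∑ j, A j k * A j k' * A j l * A j l'| ≤ ε) (x : η → ℝ) {a b c d : η} :
    x a * x b * x c * x d * ∑ j, A j a * A j b * A j c * A j d ≤
      Fintype.card ι * pairingWeight x a b c d + ε * (|x a| * |x b| * |x c| * |x d|) := by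
  by_cases hp : (a = b ∧ c = d) ∨ (a = c ∧ b = d) ∨ (a = d ∧ b = c)
  · rw [sum_mul_four_eq_card hA hp, mul_comm]
    exact le_add_of_le_of_nonneg
      (mul_le_mul_of_nonneg_left (mul_le_pairingWeight x hp) (Nat.cast_nonneg _)) (by positivity)
  · calc x a * x b * x c * x d * ∑ j, A j a * A j b * A j c * A j d
        ≤ |x a| * |x b| * |x c| * |x d| * |∑ j, A j a * A j b * A j c * A j d| := by
          simp only [← abs_mul]; exact le_abs_self _
      _ ≤ |x a| * |x b| * |x c| * |x d| * ε :=
          mul_le_mul_of_nonneg_left (abs_sum_mul_four_le hA ha hb hp) (by positivity)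
      _ ≤ _ := by
          rw [mul_comm _ ε]
          exact le_add_of_nonneg_left
            (mul_nonneg (Nat.cast_nonneg _) (pairingWeight_nonneg x a b c d))

theorem sum_sum_sum_sum_pairingWeight [Fintype η] (x : η → ℝ) :
    ∑ a, ∑ b, ∑ c, ∑ d, pairingWeight x a b c d = 3 * (∑ k, x k ^ 2) ^ 2 := by
  simp only [pairingWeight, sq, ite_and, sum_add_distrib, sum_ite_irrel, sum_ite_eq, mem_univ,
    if_true, sum_const_zero, sum_mul_sum]
  ring

end

section

variable {ι η : Type*} [Fintype ι] [Fintype η]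

theorem sum_mulVec_sq_eq (A : Matrix ι η ℝ) (x : η → ℝ) :
    ∑ j, (A *ᵥ x) j ^ 2 = ∑ a, ∑ b, x a * x b * ∑ j, A j a * A j b := by
  simp only [mulVec, dotProduct, sq, sum_mul_sum]
  simp only [mul_sum]
  rw [sum_comm]
  refine sum_congr rfl fun a _ => ?_
  rw [sum_comm]
  exact sum_congr rfl fun b _ => sum_congr rfl fun j _ => by ring

theorem sum_mulVec_pow_four_eq (A : Matrix ι η ℝ) (x : η → ℝ) :
    ∑ j, (A *ᵥ x) j ^ 4 =
      ∑ a, ∑ b, ∑ c, ∑ d, x a * x b * x c * x d * ∑ j, A j a * A j b * A j c * A j d := by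
  simp only [mulVec, dotProduct, sum_pow_four_eq]
  simp only [mul_sum]
  rw [sum_comm]
  refine sum_congr rfl fun a _ => ?_
  rw [sum_comm]
  refine sum_congr rfl fun b _ => ?_
  rw [sum_comm]
  refine sum_congr rfl fun c _ => ?_
  rw [sum_comm]
  exact sum_congr rfl fun d _ => sum_congr rfl fun j _ => by ring

variable {A : Matrix ι η ℝ} {ε : ℝ}

theorem abs_sum_mulVec_sq_sub_le [DecidableEq η] (hε : 0 ≤ ε) (hA : ∀ j k, A j k ^ 2 = 1)
    (ha : ∀ k k', k ≠ k' → |∑ j, A j k * A j k'| ≤ ε) (x : η → ℝ) :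
    |∑ j, (A *ᵥ x) j ^ 2 - Fintype.card ι * ∑ k, x k ^ 2| ≤ ε * (∑ k, |x k|) ^ 2 := by
  have entry : ∀ a b,
      |x a * x b * ∑ j, A j a * A j b - if a = b then Fintype.card ι * x a ^ 2 else 0| ≤
        ε * (|x a| * |x b|) := by
    intro a b
    split_ifs with hab
    · subst hab
      simp only [← sq, hA, sum_const, card_univ, nsmul_eq_mul, mul_one]
      rw [mul_comm, sub_self, abs_zero]
      positivity
    · rw [sub_zero, abs_mul, abs_mul, mul_comm ε]
      exact mul_le_mul_of_nonneg_left (ha a b hab) (by positivity)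
  calc |∑ j, (A *ᵥ x) j ^ 2 - Fintype.card ι * ∑ k, x k ^ 2|
      = |∑ a, ∑ b, (x a * x b * ∑ j, A j a * A j b -
          if a = b then Fintype.card ι * x a ^ 2 else 0)| := by
        simp [sum_mulVec_sq_eq, sum_sub_distrib, mul_sum]
    _ ≤ ∑ a, ∑ b, ε * (|x a| * |x b|) :=
        (abs_sum_le_sum_abs _ _).trans <| sum_le_sum fun a _ =>
          (abs_sum_le_sum_abs _ _).trans <| sum_le_sum fun b _ => entry a b
    _ = ε * (∑ k, |x k|) ^ 2 := by rw [sq, sum_mul_sum, mul_sum]; simp only [mul_sum]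

theorem sum_mulVec_pow_four_le [DecidableEq η] (hε : 0 ≤ ε) (hA : ∀ j k, A j k ^ 2 = 1)
    (ha : ∀ k k', k ≠ k' → |∑ j, A j k * A j k'| ≤ ε)
    (hb : ∀ k k' l l', k ≠ k' → k ≠ l → k ≠ l' → k' ≠ l → k' ≠ l' → l ≠ l' →
      |∑ j, A j k * A j k' * A j l * A j l'| ≤ ε) (x : η → ℝ) :
    ∑ j, (A *ᵥ x) j ^ 4 ≤ 3 * Fintype.card ι * (∑ k, x k ^ 2) ^ 2 + ε * (∑ k, |x k|) ^ 4 := by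
  calc ∑ j, (A *ᵥ x) j ^ 4
      = ∑ a, ∑ b, ∑ c, ∑ d, x a * x b * x c * x d * ∑ j, A j a * A j b * A j c * A j d :=
        sum_mulVec_pow_four_eq A x
    _ ≤ ∑ a, ∑ b, ∑ c, ∑ d, (Fintype.card ι * pairingWeight x a b c d +
          ε * (|x a| * |x b| * |x c| * |x d|)) := by
        gcongr with a _ b _ c _ d _
        exact mul_sum_mul_four_le_pairingWeight hε hA ha hb x
    _ = 3 * Fintype.card ι * (∑ k, x k ^ 2) ^ 2 + ε * (∑ k, |x k|) ^ 4 := by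
        rw [sum_pow_four_eq]
        simp only [sum_add_distrib, ← mul_sum, sum_sum_sum_sum_pairingWeight]
        ring

end

theorem sqrt_div_sqrt_le_sqrt_three_mul_rpow {δ : ℝ} (hδ₀ : 0 ≤ δ) (hδ₁ : δ < 1) :
    √(1 + δ) / √((1 - δ) ^ 3 / (3 * (1 + δ))) ≤ √3 * ((1 + δ) / (1 - δ)) ^ ((3 : ℝ) / 2) := by
  have hδ₁' : 0 < 1 - δ := sub_pos.mpr hδ₁
  have hpow : ((1 + δ) / (1 - δ)) ^ ((3 : ℝ) / 2) = √(((1 + δ) / (1 - δ)) ^ 3) := by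
    rw [Real.sqrt_eq_rpow, ← Real.rpow_natCast, ← Real.rpow_mul (by positivity)]
    norm_num
  rw [hpow, ← Real.sqrt_div (by positivity), ← Real.sqrt_mul zero_le_three]
  refine Real.sqrt_le_sqrt ?_
  calc (1 + δ) / ((1 - δ) ^ 3 / (3 * (1 + δ))) = 3 * (1 + δ) ^ 2 / (1 - δ) ^ 3 := by
        field_simp
    _ ≤ 3 * (1 + δ) ^ 3 / (1 - δ) ^ 3 := by gcongr <;> linarith
    _ = 3 * ((1 + δ) / (1 - δ)) ^ 3 := by rw [div_pow, mul_div_assoc]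

theorem mul_sqrt_mul_sq_le {κ δ m s : ℝ} (hδ : 0 < δ)
    (hm : κ ^ 2 / δ ^ 2 * s ^ 4 ≤ m) : κ * √m * s ^ 2 ≤ δ * m := by
  have h : κ * s ^ 2 / δ ≤ √m := Real.le_sqrt_of_sq_le <| by
    rwa [div_pow, mul_pow, ← pow_mul, ← div_mul_eq_mul_div]
  calc κ * √m * s ^ 2 = κ * s ^ 2 / δ * δ * √m := by field_simp
    _ ≤ √m * δ * √m := by gcongr
    _ = δ * m := by rw [mul_comm √m, mul_assoc, Real.mul_self_sqrt (le_trans (by positivity) hm)]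

theorem mul_sq_sum_le_of_sq_le_mul {ε δ m E S : ℝ} {s : ℕ} (hε : 0 ≤ ε) (hE : 0 ≤ E)
    (hS : S ^ 2 ≤ s * E) (h : ε * s ^ 2 ≤ δ * m) :
    ε * S ^ 2 ≤ δ * m * E ∧ ε * S ^ 4 ≤ δ * m * E ^ 2 := by
  have hs : (s : ℝ) ≤ s ^ 2 := by exact_mod_cast Nat.le_self_pow two_ne_zero s
  constructor
  · calc ε * S ^ 2 ≤ ε * (s * E) := by gcongr
      _ ≤ ε * (s ^ 2 * E) := by gcongr
      _ = ε * s ^ 2 * E := by ring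
      _ ≤ δ * m * E := by gcongr
  · calc ε * S ^ 4 = ε * (S ^ 2) ^ 2 := by ring
      _ ≤ ε * (s * E) ^ 2 := by gcongr
      _ = ε * s ^ 2 * E ^ 2 := by ring
      _ ≤ δ * m * E ^ 2 := by gcongr

/-- Main theorem: a `±1` matrix satisfying conditions (a) and (b) with `m ≥ κ² δ⁻² s⁴`
provides an `ℓ₂ → ℓ₁` restricted isometry on `s`-sparse vectors,
`α m ‖x‖₂ ≤ ‖Ax‖₁ ≤ β m ‖x‖₂`, with distortion `β/α ≤ √3 ((1+δ)/(1-δ))^{3/2}`;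
explicitly `α = ((1-δ)³/(3(1+δ)))^{1/2}` and `β = (1+δ)^{1/2}`. -/
theorem stmt10 (m N s : ℕ) (κ δ : ℝ) (hκ : 0 < κ) (hδ : δ ∈ Set.Ioo (0 : ℝ) 1)
    (A : Matrix (Fin m) (Fin N) ℝ) (hA : ∀ j k, A j k = 1 ∨ A j k = -1)
    (ha : ∀ k k' : Fin N, k ≠ k' → |∑ j, A j k * A j k'| ≤ κ * Real.sqrt m)
    (hb : ∀ k k' l l' : Fin N, k ≠ k' → k ≠ l → k ≠ l' → k' ≠ l → k' ≠ l' → l ≠ l' →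
      |∑ j, A j k * A j k' * A j l * A j l'| ≤ κ * Real.sqrt m)
    (hm : (m : ℝ) ≥ κ ^ 2 / δ ^ 2 * s ^ 4) :
    ∃ α β : ℝ, 0 < α ∧ 0 < β ∧
      α = ((1 - δ) ^ 3 / (3 * (1 + δ))) ^ ((1 : ℝ) / 2) ∧
      β = (1 + δ) ^ ((1 : ℝ) / 2) ∧
      β / α ≤ Real.sqrt 3 * ((1 + δ) / (1 - δ)) ^ ((3 : ℝ) / 2) ∧
      ∀ x : Fin N → ℝ, {k | x k ≠ 0}.ncard ≤ s →
        α * m * Real.sqrt (∑ k, x k ^ 2) ≤ ∑ j, |A.mulVec x j| ∧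
        ∑ j, |A.mulVec x j| ≤ β * m * Real.sqrt (∑ k, x k ^ 2) := by
  obtain ⟨hδ₀, hδ₁⟩ := hδ
  have hδ₁' : 0 < 1 - δ := sub_pos.mpr hδ₁
  refine ⟨_, _, by positivity, by positivity, Real.sqrt_eq_rpow _, Real.sqrt_eq_rpow _,
    sqrt_div_sqrt_le_sqrt_three_mul_rpow hδ₀.le hδ₁, fun x hx => ?_⟩
  have hA₂ : ∀ j k, A j k ^ 2 = 1 := fun j k => by rcases hA j k with h | h <;> simp [h]
  have hε : 0 ≤ κ * √m := by positivity
  have hE : 0 ≤ ∑ k, x k ^ 2 := sum_nonneg fun k _ => sq_nonneg _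
  have hS : (∑ k, |x k|) ^ 2 ≤ s * ∑ k, x k ^ 2 :=
    (sq_sum_abs_le_ncard_mul_sum_sq x).trans (by gcongr)
  obtain ⟨hS₂, hS₄⟩ := mul_sq_sum_le_of_sq_le_mul hε hE hS (mul_sqrt_mul_sq_le hδ₀ hm)
  obtain ⟨h₂lo, h₂hi⟩ := abs_le.mp ((abs_sum_mulVec_sq_sub_le hε hA₂ ha x).trans hS₂)
  have h₄ := (sum_mulVec_pow_four_le hε hA₂ ha hb x).trans (add_le_add le_rfl hS₄)
  simp only [Fintype.card_fin] at h₂lo h₂hi h₄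
  have : 0 ≤ δ * m * (∑ k, x k ^ 2) ^ 2 := by positivity
  constructor
  · exact le_sum_abs_of_moment_bounds _ m.cast_nonneg hδ₁ (by linarith) hE (by linarith)
      (by linarith)
  · simpa only [Fintype.card_fin] using
      sum_abs_le_of_sum_sq_le (A *ᵥ x) (by linarith) hE (by rw [Fintype.card_fin]; linarith)
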